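/- arXiv:1705.04731 — 2 statements merged into one kernel-verified Lean document; each statement's English description precedes it below -/
import Mathlib

section
/- For any MVW-rig A there is a bijection between the ideals of A and the congruences on A: to a congruence ≡ one assigns the ideal I = { x ∈ A : x ≡ 0 }, and to an ideal I the congruence x ≡_I y iff (x ⊖ y) ⊕ (y ⊖ x) ∈ I; these two assignments are mutually inverse. -/
/-- An MV-algebra `(A, ⊕, ¬, 0)`. -/
class MValg (A : Type*) where
  add : A → A → A
  neg : A → A
  zero : A
  add_assoc : ∀ x y z : A, add x (add y z) = add (add x y) z
  add_comm : ∀ x y : A, add x y = add y x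
  add_zero : ∀ x : A, add x zero = x
  add_neg_zero : ∀ x : A, add x (neg zero) = neg zero
  neg_neg : ∀ x : A, neg (neg x) = x
  mv6 : ∀ x y : A, add (neg (add (neg x) y)) y = add (neg (add (neg y) x)) x

namespace MValg

variable {A : Type*} [MValg A]

/-- Truncated difference `x ⊖ y = ¬(¬x ⊕ y)`. -/
def sub (x y : A) : A := neg (add (neg x) y)

/-- The natural MV-order: `x ≤ y` iff `x ⊖ y = 0`. -/
def le (x y : A) : Prop := sub x y = zero

/-- Join: `x ∨ y = (x ⊖ y) ⊕ y`. -/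
def sup (x y : A) : A := add (sub x y) y

/-- Meet: `x ∧ y = ¬(¬x ∨ ¬y)`. -/
def inf (x y : A) : A := neg (sup (neg x) (neg y))

end MValg

/-- An MVW-rig: an MV-algebra with an associative product interacting with ⊕ and ⊖. -/
class MVWrig (A : Type*) extends MValg A where
  mul : A → A → A
  mul_assoc : ∀ a b c : A, mul (mul a b) c = mul a (mul b c)
  mul_zero : ∀ a : A, mul a zero = zero
  zero_mul : ∀ a : A, mul zero a = zero
  mul_add_le : ∀ a b c : A, MValg.le (mul a (MValg.add b c)) (MValg.add (mul a b) (mul a c))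
  add_mul_le : ∀ a b c : A, MValg.le (mul (MValg.add b c) a) (MValg.add (mul b a) (mul c a))
  mul_sub_ge : ∀ a b c : A, MValg.le (MValg.sub (mul a b) (mul a c)) (mul a (MValg.sub b c))
  sub_mul_ge : ∀ a b c : A, MValg.le (MValg.sub (mul b a) (mul c a)) (mul (MValg.sub b c) a)

namespace MVWrig

variable {A : Type*} [MVWrig A]

/-- `pow a n` is the `(n+1)`-fold product `a^(n+1) = a·a⋯a`; exponents `n : ℕ` here
correspond exactly to the exponents `n + 1 ≥ 1` ("n-fold products") of the paper. -/
def pow (a : A) : ℕ → A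
  | 0 => a
  | n + 1 => mul (pow a n) a

/-- Ideals of an MVW-rig: contain 0, downward closed, closed under ⊕,
and absorbing for the product on both sides. -/
def IsIdeal (I : Set A) : Prop :=
  MValg.zero ∈ I ∧
  (∀ a b : A, MValg.le a b → b ∈ I → a ∈ I) ∧
  (∀ a b : A, a ∈ I → b ∈ I → MValg.add a b ∈ I) ∧
  (∀ a b : A, a ∈ I → mul a b ∈ I ∧ mul b a ∈ I)

/-- Prime ideals: `ab ∈ P` implies `a ∈ P` or `b ∈ P`. -/
def IsPrimeIdeal (P : Set A) : Prop :=
  IsIdeal P ∧ ∀ a b : A, mul a b ∈ P → a ∈ P ∨ b ∈ P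

/-- The ideal generated by a set: the smallest ideal containing it
(the intersection of all ideals containing it). -/
def genIdeal (S : Set A) : Set A := ⋂₀ {I : Set A | IsIdeal I ∧ S ⊆ I}

/-- The congruence relation associated to an ideal `I`:
`x ≡_I y` iff `(x ⊖ y) ⊕ (y ⊖ x) ∈ I`. -/
def relI (I : Set A) (x y : A) : Prop :=
  MValg.add (MValg.sub x y) (MValg.sub y x) ∈ I

/-- A congruence on an MVW-rig: an equivalence relation compatible with ⊕, ¬ and ·. -/
def IsCongruence (r : A → A → Prop) : Prop :=
  Equivalence r ∧
  (∀ a b c d : A, r a b → r c d → r (MValg.add a c) (MValg.add b d)) ∧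
  (∀ a b : A, r a b → r (MValg.neg a) (MValg.neg b)) ∧
  (∀ a b c d : A, r a b → r c d → r (mul a c) (mul b d))

/-- Homomorphisms of MVW-rigs. -/
def IsHom {A B : Type*} [MVWrig A] [MVWrig B] (f : A → B) : Prop :=
  f MValg.zero = MValg.zero ∧
  (∀ x y : A, f (MValg.add x y) = MValg.add (f x) (f y)) ∧
  (∀ x : A, f (MValg.neg x) = MValg.neg (f x)) ∧
  (∀ x y : A, f (mul x y) = mul (f x) (f y))

end MVWrig

section AuxLemmas

namespace MValg

variable {A : Type*} [MValg A]

instance : Std.Associative (α := A) add := ⟨fun a b c => (add_assoc a b c).symm⟩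
instance : Std.Commutative (α := A) add := ⟨add_comm⟩

lemma zero_add' (x : A) : add zero x = x := by rw [add_comm, add_zero]

lemma neg_add_self (x : A) : add (neg x) x = neg zero := by
  have h := mv6 x (neg zero)
  rw [add_neg_zero, neg_neg, zero_add'] at h
  exact h.symm

lemma sub_self (x : A) : sub x x = zero := by
  show neg (add (neg x) x) = zero
  rw [neg_add_self, neg_neg]

lemma sub_zero' (x : A) : sub x zero = x := by
  show neg (add (neg x) zero) = x
  rw [add_zero, neg_neg]

lemma zero_sub' (x : A) : sub zero x = zero := by
  show neg (add (neg zero) x) = zero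
  rw [add_comm, add_neg_zero, neg_neg]

lemma sub_sub' (a b c : A) : sub (sub a b) c = sub a (add b c) := by
  show neg (add (neg (neg (add (neg a) b))) c) = neg (add (neg a) (add b c))
  rw [neg_neg, add_assoc]

lemma le_add_right (x z : A) : le x (add x z) := by
  show neg (add (neg x) (add x z)) = zero
  rw [add_assoc, neg_add_self, add_comm, add_neg_zero, neg_neg]

lemma sub_add_cancel_comm (x y : A) : add (sub x y) y = add (sub y x) x := mv6 x y

lemma eq_add_of_le {x y : A} (h : le x y) : y = add (sub y x) x := by
  have h' : sub x y = zero := h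
  have hc := sub_add_cancel_comm x y
  rw [h', zero_add'] at hc
  exact hc

lemma le_refl' (x : A) : le x x := sub_self x

lemma le_trans' {x y z : A} (hxy : le x y) (hyz : le y z) : le x z := by
  have h1 := eq_add_of_le hxy
  have h2 := eq_add_of_le hyz
  have h3 : z = add x (add (sub z y) (sub y x)) := by
    calc z = add (sub z y) y := h2
      _ = add (sub z y) (add (sub y x) x) := congrArg _ h1
      _ = add x (add (sub z y) (sub y x)) := by ac_rfl
  rw [h3]
  exact le_add_right _ _

lemma add_le_add' {a b c d : A} (hab : le a b) (hcd : le c d) :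
    le (add a c) (add b d) := by
  have h1 := eq_add_of_le hab
  have h2 := eq_add_of_le hcd
  have h3 : add b d = add (add a c) (add (sub b a) (sub d c)) := by
    calc add b d = add (add (sub b a) a) (add (sub d c) c) := by rw [← h1, ← h2]
      _ = add (add a c) (add (sub b a) (sub d c)) := by ac_rfl
  rw [h3]
  exact le_add_right _ _

lemma sub_le_of_le_add {a b c : A} (h : le a (add b c)) : le (sub a b) c := by
  show sub (sub a b) c = zero
  rw [sub_sub']
  exact h

lemma sub_le_sub_add_sub (x y z : A) :
    le (sub x z) (add (sub x y) (sub y z)) := by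
  apply sub_le_of_le_add
  have key : add z (add (sub x y) (sub y z)) = add x (add (sub y x) (sub z y)) := by
    calc add z (add (sub x y) (sub y z))
        = add (sub x y) (add (sub y z) z) := by ac_rfl
      _ = add (sub x y) (add (sub z y) y) := by rw [sub_add_cancel_comm y z]
      _ = add (add (sub x y) y) (sub z y) := by ac_rfl
      _ = add (add (sub y x) x) (sub z y) := by rw [sub_add_cancel_comm x y]
      _ = add x (add (sub y x) (sub z y)) := by ac_rfl
  rw [key]
  exact le_add_right _ _

lemma sub_add_le (a b c d : A) :
    le (sub (add a c) (add b d)) (add (sub a b) (sub c d)) := by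
  apply sub_le_of_le_add
  have key : add (add b d) (add (sub a b) (sub c d))
      = add (add a c) (add (sub b a) (sub d c)) := by
    calc add (add b d) (add (sub a b) (sub c d))
        = add (add (sub a b) b) (add (sub c d) d) := by ac_rfl
      _ = add (add (sub b a) a) (add (sub d c) c) := by
          rw [sub_add_cancel_comm a b, sub_add_cancel_comm c d]
      _ = add (add a c) (add (sub b a) (sub d c)) := by ac_rfl
  rw [key]
  exact le_add_right _ _

lemma neg_sub_neg (a b : A) : sub (neg a) (neg b) = sub b a := by
  show neg (add (neg (neg a)) (neg b)) = neg (add (neg b) a)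
  rw [neg_neg, add_comm]

end MValg

end AuxLemmas

open MValg MVWrig

/-- Bijection between ideals of an MVW-rig `A` and congruences on `A`: a congruence
`r` yields the ideal `{x | r x 0}`, an ideal `I` yields the congruence `≡_I`, and
these assignments are mutually inverse. -/
theorem stmt_5 {A : Type*} [MVWrig A] :
    (∀ r : A → A → Prop, MVWrig.IsCongruence r → MVWrig.IsIdeal {x : A | r x MValg.zero}) ∧
    (∀ I : Set A, MVWrig.IsIdeal I → MVWrig.IsCongruence (MVWrig.relI I)) ∧
    (∀ I : Set A, MVWrig.IsIdeal I → {x : A | MVWrig.relI I x MValg.zero} = I) ∧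
    (∀ r : A → A → Prop, MVWrig.IsCongruence r →
      ∀ x y : A, r x y ↔ MVWrig.relI {z : A | r z MValg.zero} x y) := by
  have part1 : ∀ r : A → A → Prop, MVWrig.IsCongruence r →
      MVWrig.IsIdeal {x : A | r x MValg.zero} := by
    rintro r ⟨⟨hrefl, hsymm, htrans⟩, haddc, hnegc, hmulc⟩
    refine ⟨hrefl _, ?_, ?_, ?_⟩
    · intro a b hle hb
      have h1 : r (add (neg a) b) (add (neg a) zero) := haddc _ _ _ _ (hrefl _) hb
      have h2 : r (neg (add (neg a) b)) (neg (add (neg a) zero)) := hnegc _ _ h1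
      rw [MValg.add_zero, MValg.neg_neg] at h2
      have h3 : neg (add (neg a) b) = zero := hle
      rw [h3] at h2
      exact hsymm h2
    · intro a b ha hb
      have h := haddc _ _ _ _ ha hb
      rw [MValg.add_zero] at h
      exact h
    · intro a b ha
      constructor
      · have h := hmulc _ _ _ _ ha (hrefl b)
        rw [MVWrig.zero_mul] at h
        exact h
      · have h := hmulc _ _ _ _ (hrefl b) ha
        rw [MVWrig.mul_zero] at h
        exact h
  have part2 : ∀ I : Set A, MVWrig.IsIdeal I → MVWrig.IsCongruence (MVWrig.relI I) := by
    rintro I ⟨h0, hdown, hadd, hmul⟩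
    have hrefl : ∀ x : A, relI I x x := by
      intro x
      show add (sub x x) (sub x x) ∈ I
      rw [MValg.sub_self, MValg.add_zero]
      exact h0
    have hsymm : ∀ x y : A, relI I x y → relI I y x := by
      intro x y h
      show add (sub y x) (sub x y) ∈ I
      rw [add_comm (sub y x) (sub x y)]
      exact h
    have htrans : ∀ x y z : A, relI I x y → relI I y z → relI I x z := by
      intro x y z hxy hyz
      have l := MValg.add_le_add' (MValg.sub_le_sub_add_sub x y z) (MValg.sub_le_sub_add_sub z y x)
      have heq : add (add (sub x y) (sub y z)) (add (sub z y) (sub y x))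
          = add (add (sub x y) (sub y x)) (add (sub y z) (sub z y)) := by ac_rfl
      rw [heq] at l
      exact hdown _ _ l (hadd _ _ hxy hyz)
    refine ⟨⟨hrefl, fun {x y} h => hsymm x y h, fun {x y z} h h' => htrans x y z h h'⟩,
      ?_, ?_, ?_⟩
    · intro a b c d hab hcd
      have l := MValg.add_le_add' (MValg.sub_add_le a b c d) (MValg.sub_add_le b a d c)
      have heq : add (add (sub a b) (sub c d)) (add (sub b a) (sub d c))
          = add (add (sub a b) (sub b a)) (add (sub c d) (sub d c)) := by ac_rfl
      rw [heq] at l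
      exact hdown _ _ l (hadd _ _ hab hcd)
    · intro a b h
      show add (sub (neg a) (neg b)) (sub (neg b) (neg a)) ∈ I
      rw [MValg.neg_sub_neg a b, MValg.neg_sub_neg b a, add_comm (sub b a) (sub a b)]
      exact h
    · intro a b c d hab hcd
      have hsab : sub a b ∈ I := hdown _ _ (MValg.le_add_right _ _) hab
      have hsba : sub b a ∈ I := by
        refine hdown _ _ ?_ hab
        show le (sub b a) (add (sub a b) (sub b a))
        rw [add_comm (sub a b) (sub b a)]
        exact MValg.le_add_right _ _
      have hscd : sub c d ∈ I := hdown _ _ (MValg.le_add_right _ _) hcd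
      have hsdc : sub d c ∈ I := by
        refine hdown _ _ ?_ hcd
        show le (sub d c) (add (sub c d) (sub d c))
        rw [add_comm (sub c d) (sub d c)]
        exact MValg.le_add_right _ _
      have step1 : relI I (mul a c) (mul b c) := by
        have i1 : sub (mul a c) (mul b c) ∈ I :=
          hdown _ _ (MVWrig.sub_mul_ge c a b) (hmul _ c hsab).1
        have i2 : sub (mul b c) (mul a c) ∈ I :=
          hdown _ _ (MVWrig.sub_mul_ge c b a) (hmul _ c hsba).1
        exact hadd _ _ i1 i2
      have step2 : relI I (mul b c) (mul b d) := by
        have i1 : sub (mul b c) (mul b d) ∈ I :=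
          hdown _ _ (MVWrig.mul_sub_ge b c d) (hmul _ b hscd).2
        have i2 : sub (mul b d) (mul b c) ∈ I :=
          hdown _ _ (MVWrig.mul_sub_ge b d c) (hmul _ b hsdc).2
        exact hadd _ _ i1 i2
      exact htrans _ _ _ step1 step2
  have part3 : ∀ I : Set A, MVWrig.IsIdeal I →
      {x : A | MVWrig.relI I x MValg.zero} = I := by
    intro I _
    ext x
    simp only [Set.mem_setOf_eq]
    show add (sub x zero) (sub zero x) ∈ I ↔ x ∈ I
    rw [MValg.sub_zero', MValg.zero_sub', MValg.add_zero]
  refine ⟨part1, part2, part3, ?_⟩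
  intro r hr x y
  obtain ⟨hi0, hidown, hiadd, himul⟩ := part1 r hr
  obtain ⟨⟨hrefl, hsymm, htrans⟩, haddc, hnegc, hmulc⟩ := hr
  constructor
  · intro hxy
    have h1 : r (sub x y) (sub y y) :=
      hnegc _ _ (haddc _ _ _ _ (hnegc _ _ hxy) (hrefl y))
    rw [MValg.sub_self] at h1
    have h2 : r (sub y x) (sub x x) :=
      hnegc _ _ (haddc _ _ _ _ (hnegc _ _ (hsymm hxy)) (hrefl x))
    rw [MValg.sub_self] at h2
    have h3 := haddc _ _ _ _ h1 h2
    rw [MValg.add_zero] at h3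
    exact h3
  · intro h
    have hxyI : r (sub x y) MValg.zero := hidown _ _ (MValg.le_add_right _ _) h
    have hyxI : r (sub y x) MValg.zero := by
      refine hidown _ _ ?_ h
      show le (sub y x) (add (sub x y) (sub y x))
      rw [add_comm (sub x y) (sub y x)]
      exact MValg.le_add_right _ _
    have h4 : r (add (sub x y) y) (add MValg.zero y) := haddc _ _ _ _ hxyI (hrefl y)
    rw [MValg.zero_add'] at h4
    have h5 : r (add (sub y x) x) (add MValg.zero x) := haddc _ _ _ _ hyxI (hrefl x)
    rw [MValg.zero_add'] at h5
    rw [MValg.sub_add_cancel_comm x y] at h4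
    exact htrans (hsymm h5) h4
end

section
/- Let A be a commutative MVW-rig and I an ideal of A. Then the radical √I = { x ∈ A : x^n ∈ I for some n > 0 } equals the intersection of all prime ideals of A that contain I. -/
section Aux

open MValg MVWrig

variable {A : Type*} [MVWrig A]

instance : Std.Associative (MValg.add : A → A → A) := ⟨fun a b c => (MValg.add_assoc a b c).symm⟩
instance : Std.Commutative (MValg.add : A → A → A) := ⟨MValg.add_comm⟩

lemma mv_zero_add (x : A) : add zero x = x := by
  have h := mv6 zero x
  rw [MValg.add_zero, MValg.add_zero, MValg.neg_neg, MValg.add_comm (neg zero) x,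
    add_neg_zero, MValg.neg_neg] at h
  exact h

lemma mv_neg_add_self (x : A) : add (neg x) x = neg zero := by
  have h := mv6 (neg zero) x
  rw [MValg.neg_neg, mv_zero_add, add_neg_zero] at h
  exact h

lemma mv_le_refl (x : A) : le x x := by
  show sub x x = zero
  unfold MValg.sub
  rw [mv_neg_add_self, MValg.neg_neg]

lemma mv_eq_of_le {x y : A} (h : le x y) : add (sub y x) x = y := by
  have h' : sub x y = zero := h
  have h6 : add (sub y x) x = add (sub x y) y := mv6 y x
  rw [h6, h', mv_zero_add]

lemma mv_neg_zero_add (x : A) : add (neg zero) x = neg zero := by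
  rw [MValg.add_comm, add_neg_zero]

lemma mv_le_trans {x y z : A} (hxy : le x y) (hyz : le y z) : le x z := by
  obtain ⟨p, hp⟩ : ∃ p, add p y = z := ⟨sub z y, mv_eq_of_le hyz⟩
  obtain ⟨q, hq⟩ : ∃ q, add q x = y := ⟨sub y x, mv_eq_of_le hxy⟩
  show sub x z = zero
  unfold MValg.sub
  rw [← hp, ← hq]
  have h1 : add (neg x) (add p (add q x)) = add (add p q) (add (neg x) x) := by ac_rfl
  rw [h1, mv_neg_add_self, add_neg_zero, MValg.neg_neg]

lemma mv_zero_le (x : A) : le zero x := by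
  show sub zero x = zero
  unfold MValg.sub
  rw [mv_neg_zero_add, MValg.neg_neg]

lemma mv_le_add_right (x y : A) : le x (add x y) := by
  show sub x (add x y) = zero
  unfold MValg.sub
  rw [MValg.add_assoc, mv_neg_add_self, mv_neg_zero_add, MValg.neg_neg]

lemma mv_eq_zero_of_le_zero {x : A} (h : le x zero) : x = zero := by
  have h' : sub x zero = zero := h
  unfold MValg.sub at h'
  rw [MValg.add_zero, MValg.neg_neg] at h'
  exact h'

lemma mv_add_le_add {a b c d : A} (hab : le a b) (hcd : le c d) :
    le (add a c) (add b d) := by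
  obtain ⟨p, hp⟩ : ∃ p, add p a = b := ⟨sub b a, mv_eq_of_le hab⟩
  obtain ⟨q, hq⟩ : ∃ q, add q c = d := ⟨sub d c, mv_eq_of_le hcd⟩
  show sub (add a c) (add b d) = zero
  unfold MValg.sub
  rw [← hp, ← hq]
  have h1 : add (neg (add a c)) (add (add p a) (add q c)) =
      add (add p q) (add (neg (add a c)) (add a c)) := by ac_rfl
  rw [h1, mv_neg_add_self, add_neg_zero, MValg.neg_neg]

lemma mvw_mul_le_mul_left {b c : A} (a : A) (h : le b c) : le (mul a b) (mul a c) := by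
  have hge := mul_sub_ge a b c
  unfold le at h
  rw [h, MVWrig.mul_zero] at hge
  exact mv_eq_zero_of_le_zero hge

lemma mvw_mul_le_mul_right {b c : A} (a : A) (h : le b c) : le (mul b a) (mul c a) := by
  have hge := sub_mul_ge a b c
  unfold le at h
  rw [h, MVWrig.zero_mul] at hge
  exact mv_eq_zero_of_le_zero hge

/-- Elements generated from `a` by sums and multiples. -/
inductive MulCl (a : A) : A → Prop
  | gen : MulCl a a
  | add {s t : A} : MulCl a s → MulCl a t → MulCl a (MValg.add s t)
  | mul (c : A) {s : A} : MulCl a s → MulCl a (MVWrig.mul c s)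

lemma mulCl_subset_ideal {M : Set A} (hM : IsIdeal M) {a : A} (ha : a ∈ M) :
    ∀ {s : A}, MulCl a s → s ∈ M := by
  intro s hs
  induction hs with
  | gen => exact ha
  | add hs ht ihs iht => exact hM.2.2.1 _ _ ihs iht
  | mul c hs ih => exact (hM.2.2.2 _ c ih).2

lemma mulCl_mul (hcomm : ∀ x y : A, MVWrig.mul x y = MVWrig.mul y x)
    {a b : A} : ∀ {s : A}, MulCl a s → ∀ {t : A}, MulCl b t →
    ∃ u : A, MulCl (mul a b) u ∧ le (mul s t) u := by
  intro s hs
  induction hs with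
  | gen =>
    intro t ht
    induction ht with
    | gen => exact ⟨mul a b, MulCl.gen, mv_le_refl _⟩
    | add hu hv ihu ihv =>
      obtain ⟨pu, hpu, hlu⟩ := ihu
      obtain ⟨pv, hpv, hlv⟩ := ihv
      refine ⟨add pu pv, MulCl.add hpu hpv, ?_⟩
      exact mv_le_trans (mul_add_le a _ _) (mv_add_le_add hlu hlv)
    | @mul c u hu ih =>
      obtain ⟨p, hp, hl⟩ := ih
      refine ⟨mul c p, MulCl.mul c hp, ?_⟩
      have heq : mul a (mul c u) = mul c (mul a u) := by
        rw [← MVWrig.mul_assoc, hcomm a c, MVWrig.mul_assoc]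
      rw [heq]
      exact mvw_mul_le_mul_left c hl
  | add hu hv ihu ihv =>
    intro t ht
    obtain ⟨pu, hpu, hlu⟩ := ihu ht
    obtain ⟨pv, hpv, hlv⟩ := ihv ht
    refine ⟨add pu pv, MulCl.add hpu hpv, ?_⟩
    exact mv_le_trans (add_mul_le t _ _) (mv_add_le_add hlu hlv)
  | mul c hu ih =>
    intro t ht
    obtain ⟨p, hp, hl⟩ := ih ht
    refine ⟨mul c p, MulCl.mul c hp, ?_⟩
    rw [MVWrig.mul_assoc]
    exact mvw_mul_le_mul_left c hl

/-- The ideal generated by an ideal `M` and an element `a`. -/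
def idealSup (M : Set A) (a : A) : Set A :=
  {z : A | ∃ m ∈ M, ∃ w : A, MulCl a w ∧ le z (add m w)}

lemma zero_mem_mulCl (a : A) : MulCl a MValg.zero := by
  have := MulCl.mul (a := a) MValg.zero MulCl.gen
  rwa [MVWrig.zero_mul] at this

lemma subset_idealSup {M : Set A} (hM : IsIdeal M) (a : A) : M ⊆ idealSup M a := by
  intro m hm
  exact ⟨m, hm, MValg.zero, zero_mem_mulCl a, by rw [MValg.add_zero]; exact mv_le_refl m⟩

lemma self_mem_idealSup {M : Set A} (hM : IsIdeal M) (a : A) : a ∈ idealSup M a :=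
  ⟨MValg.zero, hM.1, a, MulCl.gen, by rw [mv_zero_add]; exact mv_le_refl a⟩

lemma idealSup_isIdeal (hcomm : ∀ x y : A, MVWrig.mul x y = MVWrig.mul y x)
    {M : Set A} (hM : IsIdeal M) (a : A) : IsIdeal (idealSup M a) := by
  refine ⟨subset_idealSup hM a hM.1, ?_, ?_, ?_⟩
  · rintro x y hxy ⟨m, hm, w, hw, hle⟩
    exact ⟨m, hm, w, hw, mv_le_trans hxy hle⟩
  · rintro x y ⟨m, hm, w, hw, hle⟩ ⟨m', hm', w', hw', hle'⟩
    refine ⟨add m m', hM.2.2.1 _ _ hm hm', add w w', MulCl.add hw hw', ?_⟩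
    have : add (add m w) (add m' w') = add (add m m') (add w w') := by ac_rfl
    exact mv_le_trans (mv_add_le_add hle hle') (this ▸ mv_le_refl _)
  · rintro x b ⟨m, hm, w, hw, hle⟩
    constructor
    · refine ⟨mul m b, (hM.2.2.2 _ b hm).1, mul b w, MulCl.mul b hw, ?_⟩
      refine mv_le_trans (mvw_mul_le_mul_right b hle) ?_
      rw [hcomm b w]
      exact add_mul_le b m w
    · refine ⟨mul b m, (hM.2.2.2 _ b hm).2, mul b w, MulCl.mul b hw, ?_⟩
      refine mv_le_trans (mvw_mul_le_mul_left b hle) ?_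
      exact mul_add_le b m w

lemma mvw_pow_mul (x : A) (r s : ℕ) : mul (pow x r) (pow x s) = pow x (r + s + 1) := by
  induction s with
  | zero => rfl
  | succ n ih =>
    show mul (pow x r) (mul (pow x n) x) = _
    rw [← MVWrig.mul_assoc, ih]
    rfl

lemma prime_mem_of_pow_mem {P : Set A} (hP : IsPrimeIdeal P) {x : A} :
    ∀ n : ℕ, pow x n ∈ P → x ∈ P := by
  intro n
  induction n with
  | zero => exact fun h => h
  | succ n ih =>
    intro h
    rcases hP.2 _ _ h with h' | h'
    · exact ih h'
    · exact h'

end Aux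

open MVWrig in
/-- The radical `√I = {x | xⁿ ∈ I for some n > 0}` of an ideal `I` of a commutative
MVW-rig is the intersection of the prime ideals containing `I`.
Here `pow x n = x^(n+1)` ranges over all exponents `≥ 1`. -/
theorem stmt_13 {A : Type*} [MVWrig A]
    (hcomm : ∀ x y : A, MVWrig.mul x y = MVWrig.mul y x)
    (I : Set A) (hI : IsIdeal I) :
    {x : A | ∃ n : ℕ, pow x n ∈ I} = ⋂₀ {P : Set A | IsPrimeIdeal P ∧ I ⊆ P} := by
  ext x
  simp only [Set.mem_setOf_eq, Set.mem_sInter]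
  constructor
  · rintro ⟨n, hn⟩ P ⟨hP, hIP⟩
    exact prime_mem_of_pow_mem hP n (hIP hn)
  · intro hx
    by_contra hno
    push_neg at hno
    have hzorn : ∀ c ⊆ {J : Set A | IsIdeal J ∧ I ⊆ J ∧ ∀ n, pow x n ∉ J},
        IsChain (· ⊆ ·) c → c.Nonempty →
        ∃ ub ∈ {J : Set A | IsIdeal J ∧ I ⊆ J ∧ ∀ n, pow x n ∉ J}, ∀ s ∈ c, s ⊆ ub := by
      rintro c hc hchain ⟨J0, hJ0⟩
      refine ⟨⋃₀ c, ⟨⟨?_, ?_, ?_, ?_⟩, ?_, ?_⟩, fun s hs => Set.subset_sUnion_of_mem hs⟩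
      · exact ⟨J0, hJ0, (hc hJ0).1.1⟩
      · rintro p q hpq ⟨J, hJ, hqJ⟩
        exact ⟨J, hJ, (hc hJ).1.2.1 p q hpq hqJ⟩
      · rintro p q ⟨J1, hJ1, hp⟩ ⟨J2, hJ2, hq⟩
        rcases hchain.total hJ1 hJ2 with h | h
        · exact ⟨J2, hJ2, (hc hJ2).1.2.2.1 p q (h hp) hq⟩
        · exact ⟨J1, hJ1, (hc hJ1).1.2.2.1 p q hp (h hq)⟩
      · rintro p q ⟨J, hJ, hp⟩
        exact ⟨⟨J, hJ, ((hc hJ).1.2.2.2 p q hp).1⟩, ⟨J, hJ, ((hc hJ).1.2.2.2 p q hp).2⟩⟩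
      · exact fun y hy => ⟨J0, hJ0, (hc hJ0).2.1 hy⟩
      · rintro n ⟨J, hJ, hpow⟩
        exact (hc hJ).2.2 n hpow
    obtain ⟨M, hIM, hMmax⟩ := zorn_subset_nonempty
      {J : Set A | IsIdeal J ∧ I ⊆ J ∧ ∀ n, pow x n ∉ J} hzorn I ⟨hI, subset_rfl, hno⟩
    obtain ⟨hMideal, hIM', hMpow⟩ := hMmax.prop
    have hprime : IsPrimeIdeal M := by
      refine ⟨hMideal, ?_⟩
      intro a b hab
      by_contra hcon
      push_neg at hcon
      obtain ⟨ha, hb⟩ := hcon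
      have key : ∀ d : A, d ∉ M → ∃ r, pow x r ∈ idealSup M d := by
        intro d hd
        by_contra h
        push_neg at h
        have hmem : idealSup M d ∈
            {J : Set A | IsIdeal J ∧ I ⊆ J ∧ ∀ n, pow x n ∉ J} :=
          ⟨idealSup_isIdeal hcomm hMideal d,
            hIM'.trans (subset_idealSup hMideal d), h⟩
        have hsub := hMmax.2 hmem (subset_idealSup hMideal d)
        exact hd (hsub (self_mem_idealSup hMideal d))
      obtain ⟨r, m, hm, w, hw, hle⟩ := key a ha
      obtain ⟨s, m', hm', w', hw', hle'⟩ := key b hb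
      obtain ⟨t, ht, hlt⟩ := mulCl_mul hcomm hw hw'
      -- the bound element, all of whose parts lie in M
      have h1 : MVWrig.mul m m' ∈ M := (hMideal.2.2.2 m m' hm).1
      have h2 : MVWrig.mul w m' ∈ M := (hMideal.2.2.2 m' w hm').2
      have h3 : MVWrig.mul m w' ∈ M := (hMideal.2.2.2 m w' hm).1
      have h4 : t ∈ M := mulCl_subset_ideal hMideal hab ht
      have hB : MValg.add (MValg.add (MVWrig.mul m m') (MVWrig.mul w m'))
          (MValg.add (MVWrig.mul m w') t) ∈ M :=
        hMideal.2.2.1 _ _ (hMideal.2.2.1 _ _ h1 h2) (hMideal.2.2.1 _ _ h3 h4)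
      -- chain of inequalities
      have c1 : MValg.le (pow x (r + s + 1))
          (MVWrig.mul (MValg.add m w) (MValg.add m' w')) := by
        rw [← mvw_pow_mul]
        exact mv_le_trans (mvw_mul_le_mul_right (pow x s) hle)
          (mvw_mul_le_mul_left (MValg.add m w) hle')
      have c2 : MValg.le (MVWrig.mul (MValg.add m w) (MValg.add m' w'))
          (MValg.add (MVWrig.mul (MValg.add m w) m') (MVWrig.mul (MValg.add m w) w')) :=
        mul_add_le (MValg.add m w) m' w'
      have c3 : MValg.le (MValg.add (MVWrig.mul (MValg.add m w) m')
            (MVWrig.mul (MValg.add m w) w'))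
          (MValg.add (MValg.add (MVWrig.mul m m') (MVWrig.mul w m'))
            (MValg.add (MVWrig.mul m w') (MVWrig.mul w w'))) :=
        mv_add_le_add (add_mul_le m' m w) (add_mul_le w' m w)
      have c4 : MValg.le (MValg.add (MValg.add (MVWrig.mul m m') (MVWrig.mul w m'))
            (MValg.add (MVWrig.mul m w') (MVWrig.mul w w')))
          (MValg.add (MValg.add (MVWrig.mul m m') (MVWrig.mul w m'))
            (MValg.add (MVWrig.mul m w') t)) :=
        mv_add_le_add (mv_le_refl _) (mv_add_le_add (mv_le_refl _) hlt)
      have hfin : pow x (r + s + 1) ∈ M :=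
        hMideal.2.1 _ _ (mv_le_trans c1 (mv_le_trans c2 (mv_le_trans c3 c4))) hB
      exact hMpow (r + s + 1) hfin
    exact hMpow 0 (hx M ⟨hprime, hIM'⟩)
end
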